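/- arXiv:1408.2099 — 2 statements merged into one kernel-verified Lean document; each statement's English description precedes it below -/
import Mathlib

section
/- For smooth functions ρ,u on {R>0}×ℝ_φ×ℝ_Z, set ρ̂ := R²ρ, v_pol := (−R∂_Zu)e_R+(R∂_Ru)e_Z, and w := Δ_pol u. Then e_φ·∇×( ρ̂ (v_pol·∇v_pol) ) = −(1/2)[R²|∇_pol u|², ρ̂] − [R²ρ̂ w, u], where |∇_pol u|² := (∂_Ru)²+(∂_Zu)². -/
noncomputable section
set_option linter.unusedVariables false

open Real

/-- Scalar fields on the cylindrical domain, as functions of `(R, φ, Z)`. -/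
abbrev F3 := ℝ → ℝ → ℝ → ℝ

/-- Partial derivative in `R`. -/
def dR (f : F3) (R φ Z : ℝ) : ℝ := deriv (fun r => f r φ Z) R

/-- Partial derivative in `φ`. -/
def dP (f : F3) (R φ Z : ℝ) : ℝ := deriv (fun a => f R a Z) φ

/-- Partial derivative in `Z`. -/
def dZ (f : F3) (R φ Z : ℝ) : ℝ := deriv (fun z => f R φ z) Z

/-- Joint smoothness (C^∞) of a scalar field. -/
def Smooth3 (f : F3) : Prop :=
  ContDiff ℝ (⊤ : ℕ∞) fun q : ℝ × ℝ × ℝ => f q.1 q.2.1 q.2.2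

/-- Poisson bracket `[a,b] = ∂_R a ∂_Z b − ∂_Z a ∂_R b`. -/
def pb (a b : F3) (R φ Z : ℝ) : ℝ :=
  dR a R φ Z * dZ b R φ Z - dZ a R φ Z * dR b R φ Z

/-- Grad–Shafranov operator `Δ* f = R ∂_R((1/R) ∂_R f) + ∂_ZZ f`. -/
def GS (f : F3) (R φ Z : ℝ) : ℝ :=
  R * dR (fun r a z => (1 / r) * dR f r a z) R φ Z + dZ (dZ f) R φ Z

/-- Poloidal Laplacian `Δ_pol f = (1/R) ∂_R(R ∂_R f) + ∂_ZZ f`. -/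
def LapPol (f : F3) (R φ Z : ℝ) : ℝ :=
  (1 / R) * dR (fun r a z => r * dR f r a z) R φ Z + dZ (dZ f) R φ Z

/-- Cylindrical divergence `∇·F = (1/R)∂_R(R F_R) + (1/R)∂_φ F_φ + ∂_Z F_Z`. -/
def divC (FR Fφ FZ : F3) (R φ Z : ℝ) : ℝ :=
  (1 / R) * dR (fun r a z => r * FR r a z) R φ Z + (1 / R) * dP Fφ R φ Z + dZ FZ R φ Z

/-- Scalar advection `X·∇f = X_R ∂_R f + (X_φ/R) ∂_φ f + X_Z ∂_Z f`. -/
def advS (XvR XvP XvZ f : F3) (R φ Z : ℝ) : ℝ :=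
  XvR R φ Z * dR f R φ Z + XvP R φ Z / R * dP f R φ Z + XvZ R φ Z * dZ f R φ Z

/-- `e_R`-component of the vector advection `X·∇Y`. -/
def advVR (XvR XvP XvZ YvR YvP YvZ : F3) (R φ Z : ℝ) : ℝ :=
  advS XvR XvP XvZ YvR R φ Z - XvP R φ Z * YvP R φ Z / R

/-- `e_φ`-component of the vector advection `X·∇Y`. -/
def advVP (XvR XvP XvZ YvR YvP YvZ : F3) (R φ Z : ℝ) : ℝ :=
  advS XvR XvP XvZ YvP R φ Z + XvP R φ Z * YvR R φ Z / R

/-- `e_Z`-component of the vector advection `X·∇Y`. -/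
def advVZ (XvR XvP XvZ YvR YvP YvZ : F3) (R φ Z : ℝ) : ℝ :=
  advS XvR XvP XvZ YvZ R φ Z

/-- `e_R`-component of `B = (1/R)∇ψ×e_φ + (F0/R)e_φ`. -/
def BR (ψ : F3) : F3 := fun R φ Z => (1 / R) * dZ ψ R φ Z

/-- `e_φ`-component of the magnetic field. -/
def BP (F0 : ℝ) : F3 := fun R _ _ => F0 / R

/-- `e_Z`-component of the magnetic field. -/
def BZ (ψ : F3) : F3 := fun R φ Z => -(1 / R) * dR ψ R φ Z

/-- `e_R`-component of `v_pol = −R∇u×e_φ`. -/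
def vR (u : F3) : F3 := fun R φ Z => -R * dZ u R φ Z

/-- `e_Z`-component of `v_pol = −R∇u×e_φ`. -/
def vZ (u : F3) : F3 := fun R φ Z => R * dR u R φ Z

/-- The zero field. -/
def zeroF : F3 := fun _ _ _ => 0

/-- `|B|² = (F0² + (∂_Rψ)² + (∂_Zψ)²)/R²`. -/
def B2 (F0 : ℝ) (ψ : F3) : F3 := fun R φ Z =>
  (F0 ^ 2 + (dR ψ R φ Z) ^ 2 + (dZ ψ R φ Z) ^ 2) / R ^ 2

/-- `|B_pol|² = ((∂_Rψ)² + (∂_Zψ)²)/R²`. -/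
def Bpol2 (ψ : F3) : F3 := fun R φ Z => ((dR ψ R φ Z) ^ 2 + (dZ ψ R φ Z) ^ 2) / R ^ 2

/-- `ρ̂ = R²ρ`. -/
def rh (ρ : F3) : F3 := fun R φ Z => R ^ 2 * ρ R φ Z

/-- `∇_pol a · ∇_pol b`. -/
def gdot (a b : F3) : F3 := fun R φ Z =>
  dR a R φ Z * dR b R φ Z + dZ a R φ Z * dZ b R φ Z

/-- `e_R`-component of `v∥ B`. -/
def XR (ψ vpar : F3) : F3 := fun R φ Z => vpar R φ Z * BR ψ R φ Z

/-- `e_φ`-component of `v∥ B`. -/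
def XP (F0 : ℝ) (vpar : F3) : F3 := fun R φ Z => vpar R φ Z * BP F0 R φ Z

/-- `e_Z`-component of `v∥ B`. -/
def XZ (ψ vpar : F3) : F3 := fun R φ Z => vpar R φ Z * BZ ψ R φ Z

/-!
With `v_pol = (a, b)` and `ζ = ∂_R b − ∂_Z a`, the advection has the Lamb form
`v_pol·∇v_pol = ½∇(a² + b²) + ζ (a e_Z − b e_R)`. For `a = −R∂_Z u`, `b = R∂_R u` one has
`a² + b² = R²|∇_pol u|²` and `Rζ = R²w`, so `ρ̂ (v_pol·∇v_pol) = ½ ρ̂ ∇(R²|∇_pol u|²) − (R²ρ̂w) ∇u`.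
The theorem follows since `e_φ·∇×(g ∇f) = [g, f]` by the symmetry of mixed partials.
-/

open scoped ContDiff

def uncurry3 (f : F3) : ℝ × ℝ × ℝ → ℝ := fun q => f q.1 q.2.1 q.2.2

def curlPhi (FR FZ : F3) : F3 := fun R φ Z => dR FZ R φ Z - dZ FR R φ Z

def vorticity (a b : F3) : F3 := fun R φ Z => dR b R φ Z - dZ a R φ Z

namespace Smooth3

variable {f g : F3}

theorem add (hf : Smooth3 f) (hg : Smooth3 g) : Smooth3 fun r φ z => f r φ z + g r φ z :=
  ContDiff.add hf hg

theorem mul (hf : Smooth3 f) (hg : Smooth3 g) : Smooth3 fun r φ z => f r φ z * g r φ z :=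
  ContDiff.mul hf hg

theorem neg (hf : Smooth3 f) : Smooth3 fun r φ z => -f r φ z :=
  ContDiff.neg hf

theorem pow (hf : Smooth3 f) (n : ℕ) : Smooth3 fun r φ z => f r φ z ^ n :=
  ContDiff.pow hf n

theorem coordR : Smooth3 fun r _ _ => r :=
  contDiff_fst

theorem const (c : ℝ) : Smooth3 fun _ _ _ => c :=
  contDiff_const

theorem hasFDerivAt (hf : Smooth3 f) (q : ℝ × ℝ × ℝ) :
    HasFDerivAt (uncurry3 f) (fderiv ℝ (uncurry3 f) q) q :=
  (hf.differentiable (by simp)).differentiableAt.hasFDerivAt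

theorem hasDerivAt_dR (hf : Smooth3 f) (R φ Z : ℝ) :
    HasDerivAt (fun r => f r φ Z) (fderiv ℝ (uncurry3 f) (R, φ, Z) (1, 0, 0)) R :=
  (hf.hasFDerivAt (R, φ, Z)).comp_hasDerivAt (f := fun r => (r, φ, Z)) R
    ((hasDerivAt_id' R).prodMk (hasDerivAt_const R (φ, Z)))

theorem hasDerivAt_dZ (hf : Smooth3 f) (R φ Z : ℝ) :
    HasDerivAt (fun z => f R φ z) (fderiv ℝ (uncurry3 f) (R, φ, Z) (0, 0, 1)) Z :=
  (hf.hasFDerivAt (R, φ, Z)).comp_hasDerivAt (f := fun z => (R, φ, z)) Z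
    ((hasDerivAt_const Z R).prodMk ((hasDerivAt_const Z φ).prodMk (hasDerivAt_id' Z)))

theorem uncurry3_dR (hf : Smooth3 f) :
    uncurry3 (dR f) = fun q => fderiv ℝ (uncurry3 f) q (1, 0, 0) :=
  funext fun q => (hf.hasDerivAt_dR q.1 q.2.1 q.2.2).deriv

theorem uncurry3_dZ (hf : Smooth3 f) :
    uncurry3 (dZ f) = fun q => fderiv ℝ (uncurry3 f) q (0, 0, 1) :=
  funext fun q => (hf.hasDerivAt_dZ q.1 q.2.1 q.2.2).deriv

theorem contDiff_fderiv (hf : Smooth3 f) : ContDiff ℝ ∞ (fderiv ℝ (uncurry3 f)) :=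
  (contDiff_infty_iff_fderiv.mp hf).2

theorem differentiableAt_R (hf : Smooth3 f) (R φ Z : ℝ) :
    DifferentiableAt ℝ (fun r => f r φ Z) R :=
  (hf.hasDerivAt_dR R φ Z).differentiableAt

theorem differentiableAt_Z (hf : Smooth3 f) (R φ Z : ℝ) :
    DifferentiableAt ℝ (fun z => f R φ z) Z :=
  (hf.hasDerivAt_dZ R φ Z).differentiableAt

theorem dR (hf : Smooth3 f) : Smooth3 (dR f) := by
  change ContDiff ℝ ∞ (uncurry3 (_root_.dR f))
  rw [hf.uncurry3_dR]
  exact hf.contDiff_fderiv.clm_apply contDiff_const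

theorem dZ (hf : Smooth3 f) : Smooth3 (dZ f) := by
  change ContDiff ℝ ∞ (uncurry3 (_root_.dZ f))
  rw [hf.uncurry3_dZ]
  exact hf.contDiff_fderiv.clm_apply contDiff_const

end Smooth3

section PartialDerivatives

variable {f g : F3}

theorem fderiv_fderiv_apply (hf : Smooth3 f) (q v w : ℝ × ℝ × ℝ) :
    fderiv ℝ (fun p => fderiv ℝ (uncurry3 f) p v) q w
      = fderiv ℝ (fderiv ℝ (uncurry3 f)) q w v := by
  rw [fderiv_clm_apply ((hf.contDiff_fderiv.differentiable (by simp)).differentiableAt)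
    (differentiableAt_const v)]
  simp

theorem dR_dZ_comm (hf : Smooth3 f) : dR (dZ f) = dZ (dR f) := by
  funext R φ Z
  have hsymm : IsSymmSndFDerivAt ℝ (uncurry3 f) (R, φ, Z) :=
    hf.contDiffAt.isSymmSndFDerivAt (by rw [minSmoothness_of_isRCLikeNormedField]; exact ENat.LEInfty.out)
  calc dR (dZ f) R φ Z = fderiv ℝ (uncurry3 (dZ f)) (R, φ, Z) (1, 0, 0) :=
        (hf.dZ.hasDerivAt_dR R φ Z).deriv
    _ = fderiv ℝ (fderiv ℝ (uncurry3 f)) (R, φ, Z) (1, 0, 0) (0, 0, 1) := by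
        rw [hf.uncurry3_dZ, fderiv_fderiv_apply hf]
    _ = fderiv ℝ (fderiv ℝ (uncurry3 f)) (R, φ, Z) (0, 0, 1) (1, 0, 0) := hsymm _ _
    _ = fderiv ℝ (uncurry3 (dR f)) (R, φ, Z) (0, 0, 1) := by
        rw [hf.uncurry3_dR, fderiv_fderiv_apply hf]
    _ = dZ (dR f) R φ Z := (hf.dR.hasDerivAt_dZ R φ Z).deriv.symm

variable {R φ Z : ℝ}

theorem dR_sub (hf : DifferentiableAt ℝ (fun r => f r φ Z) R)
    (hg : DifferentiableAt ℝ (fun r => g r φ Z) R) :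
    dR (fun r a z => f r a z - g r a z) R φ Z = dR f R φ Z - dR g R φ Z :=
  deriv_sub hf hg

theorem dZ_sub (hf : DifferentiableAt ℝ (fun z => f R φ z) Z)
    (hg : DifferentiableAt ℝ (fun z => g R φ z) Z) :
    dZ (fun r a z => f r a z - g r a z) R φ Z = dZ f R φ Z - dZ g R φ Z :=
  deriv_sub hf hg

theorem dR_mul (hf : DifferentiableAt ℝ (fun r => f r φ Z) R)
    (hg : DifferentiableAt ℝ (fun r => g r φ Z) R) :
    dR (fun r a z => f r a z * g r a z) R φ Z = dR f R φ Z * g R φ Z + f R φ Z * dR g R φ Z :=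
  deriv_mul hf hg

theorem dZ_mul (hf : DifferentiableAt ℝ (fun z => f R φ z) Z)
    (hg : DifferentiableAt ℝ (fun z => g R φ z) Z) :
    dZ (fun r a z => f r a z * g r a z) R φ Z = dZ f R φ Z * g R φ Z + f R φ Z * dZ g R φ Z :=
  deriv_mul hf hg

theorem dR_const_mul (c : ℝ) : dR (fun r a z => c * f r a z) R φ Z = c * dR f R φ Z :=
  deriv_const_mul_field c

theorem dZ_const_mul (c : ℝ) : dZ (fun r a z => c * f r a z) R φ Z = c * dZ f R φ Z :=
  deriv_const_mul_field c

end PartialDerivatives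

theorem pb_anticomm (f g : F3) (R φ Z : ℝ) : pb f g R φ Z = -pb g f R φ Z := by
  unfold pb
  ring

section Curl

variable {f g FR FZ GR GZ : F3} {R φ Z : ℝ}

theorem curlPhi_sub (hFR : DifferentiableAt ℝ (fun z => FR R φ z) Z)
    (hGR : DifferentiableAt ℝ (fun z => GR R φ z) Z)
    (hFZ : DifferentiableAt ℝ (fun r => FZ r φ Z) R)
    (hGZ : DifferentiableAt ℝ (fun r => GZ r φ Z) R) :
    curlPhi (fun r a z => FR r a z - GR r a z) (fun r a z => FZ r a z - GZ r a z) R φ Z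
      = curlPhi FR FZ R φ Z - curlPhi GR GZ R φ Z := by
  simp only [curlPhi, dR_sub hFZ hGZ, dZ_sub hFR hGR]
  ring

theorem curlPhi_const_mul (c : ℝ) :
    curlPhi (fun r a z => c * FR r a z) (fun r a z => c * FZ r a z) R φ Z
      = c * curlPhi FR FZ R φ Z := by
  simp only [curlPhi, dR_const_mul, dZ_const_mul]
  ring

theorem curlPhi_mul_grad (hg : Smooth3 g) (hf : Smooth3 f) :
    curlPhi (fun r a z => g r a z * dR f r a z) (fun r a z => g r a z * dZ f r a z) R φ Z
      = pb g f R φ Z := by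
  simp only [curlPhi, pb, dR_mul (hg.differentiableAt_R R φ Z) (hf.dZ.differentiableAt_R R φ Z),
    dZ_mul (hg.differentiableAt_Z R φ Z) (hf.dR.differentiableAt_Z R φ Z), dR_dZ_comm hf]
  ring

theorem curlPhi_half_mul_grad_sub_mul_grad {E W : F3} (hg : Smooth3 g) (hE : Smooth3 E)
    (hW : Smooth3 W) (hf : Smooth3 f) :
    curlPhi (fun r a z => 1 / 2 * (g r a z * dR E r a z) - W r a z * dR f r a z)
        (fun r a z => 1 / 2 * (g r a z * dZ E r a z) - W r a z * dZ f r a z) R φ Z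
      = 1 / 2 * pb g E R φ Z - pb W f R φ Z := by
  rw [curlPhi_sub, curlPhi_const_mul, curlPhi_mul_grad hg hE, curlPhi_mul_grad hW hf]
  · exact ((Smooth3.const _).mul (hg.mul hE.dR)).differentiableAt_Z R φ Z
  · exact (hW.mul hf.dR).differentiableAt_Z R φ Z
  · exact ((Smooth3.const _).mul (hg.mul hE.dZ)).differentiableAt_R R φ Z
  · exact (hW.mul hf.dZ).differentiableAt_R R φ Z

end Curl

section Advection

variable {a b : F3} {R φ Z : ℝ}

theorem advVR_poloidal (ha : DifferentiableAt ℝ (fun r => a r φ Z) R)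
    (hb : DifferentiableAt ℝ (fun r => b r φ Z) R) :
    advVR a zeroF b a zeroF b R φ Z
      = 1 / 2 * dR (fun r φ z => a r φ z ^ 2 + b r φ z ^ 2) R φ Z
        - b R φ Z * vorticity a b R φ Z := by
  have hsq : dR (fun r φ z => a r φ z ^ 2 + b r φ z ^ 2) R φ Z
      = 2 * a R φ Z * dR a R φ Z + 2 * b R φ Z * dR b R φ Z := by
    rw [dR, deriv_fun_add (ha.fun_pow 2) (hb.fun_pow 2), deriv_fun_pow ha, deriv_fun_pow hb]
    simp only [dR, Nat.cast_ofNat]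
    ring
  simp only [advVR, advS, vorticity, zeroF, hsq]
  ring

theorem advVZ_poloidal (ha : DifferentiableAt ℝ (fun z => a R φ z) Z)
    (hb : DifferentiableAt ℝ (fun z => b R φ z) Z) :
    advVZ a zeroF b a zeroF b R φ Z
      = 1 / 2 * dZ (fun r φ z => a r φ z ^ 2 + b r φ z ^ 2) R φ Z
        + a R φ Z * vorticity a b R φ Z := by
  have hsq : dZ (fun r φ z => a r φ z ^ 2 + b r φ z ^ 2) R φ Z
      = 2 * a R φ Z * dZ a R φ Z + 2 * b R φ Z * dZ b R φ Z := by
    rw [dZ, deriv_fun_add (ha.fun_pow 2) (hb.fun_pow 2), deriv_fun_pow ha, deriv_fun_pow hb]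
    simp only [dZ, Nat.cast_ofNat]
    ring
  simp only [advVZ, advS, vorticity, zeroF, hsq]
  ring

end Advection

section PoloidalVelocity

variable {u : F3}

theorem Smooth3.vR (hu : Smooth3 u) : Smooth3 (vR u) :=
  Smooth3.coordR.neg.mul hu.dZ

theorem Smooth3.vZ (hu : Smooth3 u) : Smooth3 (vZ u) :=
  Smooth3.coordR.mul hu.dR

-- `R² · (1/R)` is `R` also at `R = 0`, so `R² Δ_pol u` is smooth across the axis.
theorem sq_mul_LapPol (u : F3) (R φ Z : ℝ) :
    R ^ 2 * LapPol u R φ Z = R * dR (vZ u) R φ Z + R ^ 2 * dZ (dZ u) R φ Z := by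
  rcases eq_or_ne R 0 with rfl | hR
  · simp
  · rw [LapPol]
    field_simp
    rfl

theorem Smooth3.sq_mul_LapPol (hu : Smooth3 u) : Smooth3 fun r φ z => r ^ 2 * LapPol u r φ z := by
  simp only [_root_.sq_mul_LapPol]
  exact (Smooth3.coordR.mul hu.vZ.dR).add ((Smooth3.coordR.pow 2).mul hu.dZ.dZ)

theorem sqNorm_vR_vZ (u : F3) :
    (fun r φ z => vR u r φ z ^ 2 + vZ u r φ z ^ 2) = fun r φ z => r ^ 2 * gdot u u r φ z := by
  funext r φ z
  simp only [vR, vZ, gdot]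
  ring

theorem dZ_vR (u : F3) (R φ Z : ℝ) : dZ (vR u) R φ Z = -R * dZ (dZ u) R φ Z :=
  deriv_const_mul_field _

theorem mul_vorticity_vR_vZ (u : F3) (R φ Z : ℝ) :
    R * vorticity (vR u) (vZ u) R φ Z = R ^ 2 * LapPol u R φ Z := by
  rw [sq_mul_LapPol, vorticity, dZ_vR]
  ring

variable {R φ Z : ℝ}

theorem advVR_vR_vZ (hu : Smooth3 u) :
    advVR (vR u) zeroF (vZ u) (vR u) zeroF (vZ u) R φ Z
      = 1 / 2 * dR (fun r φ z => r ^ 2 * gdot u u r φ z) R φ Z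
        - R ^ 2 * LapPol u R φ Z * dR u R φ Z := by
  rw [advVR_poloidal (hu.vR.differentiableAt_R R φ Z) (hu.vZ.differentiableAt_R R φ Z),
    sqNorm_vR_vZ, ← mul_vorticity_vR_vZ, vZ]
  ring

theorem advVZ_vR_vZ (hu : Smooth3 u) :
    advVZ (vR u) zeroF (vZ u) (vR u) zeroF (vZ u) R φ Z
      = 1 / 2 * dZ (fun r φ z => r ^ 2 * gdot u u r φ z) R φ Z
        - R ^ 2 * LapPol u R φ Z * dZ u R φ Z := by
  rw [advVZ_poloidal (hu.vR.differentiableAt_Z R φ Z) (hu.vZ.differentiableAt_Z R φ Z),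
    sqNorm_vR_vZ, ← mul_vorticity_vR_vZ, vR]
  ring

end PoloidalVelocity

/-- `e_φ·∇×(ρ̂ (v_pol·∇v_pol)) = −½[R²|∇_pol u|², ρ̂] − [R²ρ̂ w, u]`. -/
theorem curl_phi_of_poloidal_advection (ρ u : F3) (hρ : Smooth3 ρ) (hu : Smooth3 u) :
    ∀ R φ Z : ℝ, 0 < R →
      dR (fun r a z => rh ρ r a z * advVZ (vR u) zeroF (vZ u) (vR u) zeroF (vZ u) r a z) R φ Z
        - dZ (fun r a z => rh ρ r a z * advVR (vR u) zeroF (vZ u) (vR u) zeroF (vZ u) r a z) R φ Z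
      = -(1 / 2) * pb (fun r a z => r ^ 2 * gdot u u r a z) (rh ρ) R φ Z
        - pb (fun r a z => r ^ 2 * rh ρ r a z * LapPol u r a z) u R φ Z := by
  intro R φ Z _
  have hrh : Smooth3 (rh ρ) := (Smooth3.coordR.pow 2).mul hρ
  have hE : Smooth3 fun r a z => r ^ 2 * gdot u u r a z := by
    rw [← sqNorm_vR_vZ]
    exact (hu.vR.pow 2).add (hu.vZ.pow 2)
  have hW : Smooth3 fun r a z => r ^ 2 * rh ρ r a z * LapPol u r a z := by
    convert hrh.mul hu.sq_mul_LapPol using 1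
    funext r a z
    ring
  have hR : (fun r a z => rh ρ r a z * advVR (vR u) zeroF (vZ u) (vR u) zeroF (vZ u) r a z)
      = fun r a z => 1 / 2 * (rh ρ r a z * dR (fun r a z => r ^ 2 * gdot u u r a z) r a z)
          - r ^ 2 * rh ρ r a z * LapPol u r a z * dR u r a z := by
    funext r a z; rw [advVR_vR_vZ hu]; ring
  have hZ : (fun r a z => rh ρ r a z * advVZ (vR u) zeroF (vZ u) (vR u) zeroF (vZ u) r a z)
      = fun r a z => 1 / 2 * (rh ρ r a z * dZ (fun r a z => r ^ 2 * gdot u u r a z) r a z)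
          - r ^ 2 * rh ρ r a z * LapPol u r a z * dZ u r a z := by
    funext r a z; rw [advVZ_vR_vZ hu]; ring
  change curlPhi _ _ R φ Z = _
  rw [hR, hZ, curlPhi_half_mul_grad_sub_mul_grad hrh hE hW hu, pb_anticomm (rh ρ)]
  ring
end
end

section
/- Let F0∈ℝ and let ψ,v∥,ρ be smooth on {R>0}×ℝ_φ×ℝ_Z; set B := ((1/R)∂_Zψ)e_R+(F0/R)e_φ+(−(1/R)∂_Rψ)e_Z and |B|² := (F0²+(∂_Rψ)²+(∂_Zψ)²)/R². Then B·( ρ (v∥B)·∇(v∥B) ) = −(ρ/R)[ψ, v∥²|B|²/2] + ρ(F0/R²)∂_φ( v∥²|B|²/2 ). -/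
noncomputable section
set_option linter.unusedVariables false

open Real

/-! With `X = v∥ B`, the curvature terms `−X_φ²/R` and `X_φ X_R/R` of `X·∇X` cancel in its dot
product with `B`, and the Leibniz rule in each coordinate direction gives
`B·(X·∇X) = |B|² (X·∇v∥) + v∥ X·∇(|B|²/2) = B·∇(v∥² |B|²/2)`.
For the axisymmetric field `B`, finally, `B·∇f = −(1/R)[ψ, f] + (F0/R²) ∂_φ f`. -/

theorem deriv_sum_sq_div_two {ι : Type*} [Fintype ι] {w : ι → ℝ → ℝ} {x : ℝ}
    (hw : ∀ i, DifferentiableAt ℝ (w i) x) :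
    deriv (fun t => (∑ i, w i t ^ 2) / 2) x = ∑ i, w i x * deriv (w i) x := by
  rw [deriv_div_const, deriv_fun_sum fun i _ => (hw i).fun_pow 2, Finset.sum_div]
  refine Finset.sum_congr rfl fun i _ => ?_
  rw [deriv_fun_pow (hw i)]
  ring

theorem deriv_sq_mul_sq_add_sq_add_sq_div_two {v b₁ b₂ b₃ : ℝ → ℝ} {x : ℝ}
    (hv : DifferentiableAt ℝ v x) (h₁ : DifferentiableAt ℝ b₁ x)
    (h₂ : DifferentiableAt ℝ b₂ x) (h₃ : DifferentiableAt ℝ b₃ x) :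
    deriv (fun t => v t ^ 2 * (b₁ t ^ 2 + b₂ t ^ 2 + b₃ t ^ 2) / 2) x
      = v x * (b₁ x * deriv (fun t => v t * b₁ t) x + b₂ x * deriv (fun t => v t * b₂ t) x
          + b₃ x * deriv (fun t => v t * b₃ t) x) := by
  let w : Fin 3 → ℝ → ℝ := ![fun t => v t * b₁ t, fun t => v t * b₂ t, fun t => v t * b₃ t]
  have hw : ∀ i, DifferentiableAt ℝ (w i) x := by
    intro i; fin_cases i
    exacts [hv.mul h₁, hv.mul h₂, hv.mul h₃]
  have hsum := deriv_sum_sq_div_two hw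
  simp only [w, Fin.sum_univ_three, Matrix.cons_val_zero, Matrix.cons_val_one,
    Matrix.cons_val_two, Matrix.head_cons, Matrix.tail_cons] at hsum
  convert hsum using 1
  · congr 1; funext t; ring
  · ring

def PartiallyDifferentiableAt (f : F3) (R φ Z : ℝ) : Prop :=
  DifferentiableAt ℝ (fun r => f r φ Z) R ∧ DifferentiableAt ℝ (fun a => f R a Z) φ ∧
    DifferentiableAt ℝ (fun z => f R φ z) Z

theorem Smooth3.partiallyDifferentiableAt {f : F3} (hf : Smooth3 f) (R φ Z : ℝ) :
    PartiallyDifferentiableAt f R φ Z := by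
  have hF := hf.differentiable (by simp)
  have h₁ : DifferentiableAt ℝ (fun r : ℝ => ((r, φ, Z) : ℝ × ℝ × ℝ)) R := by fun_prop
  have h₂ : DifferentiableAt ℝ (fun a : ℝ => ((R, a, Z) : ℝ × ℝ × ℝ)) φ := by fun_prop
  have h₃ : DifferentiableAt ℝ (fun z : ℝ => ((R, φ, z) : ℝ × ℝ × ℝ)) Z := by fun_prop
  exact ⟨(hF _).comp R h₁, (hF _).comp φ h₂, (hF _).comp Z h₃⟩

theorem smooth3_dR {f : F3} (hf : Smooth3 f) : Smooth3 (dR f) := by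
  have hF := hf.differentiable (by simp)
  have h : (fun q : ℝ × ℝ × ℝ => dR f q.1 q.2.1 q.2.2)
      = fun q => fderiv ℝ (fun q : ℝ × ℝ × ℝ => f q.1 q.2.1 q.2.2) q (1, 0, 0) := by
    funext q
    have hline : HasDerivAt (fun t : ℝ => ((t, q.2.1, q.2.2) : ℝ × ℝ × ℝ)) (1, 0, 0) q.1 :=
      (hasDerivAt_id _).prodMk ((hasDerivAt_const _ _).prodMk (hasDerivAt_const _ _))
    exact ((hF q).hasFDerivAt.comp_hasDerivAt q.1 hline).deriv
  rw [Smooth3, h]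
  exact (hf.fderiv_right (by simp)).clm_apply contDiff_const

theorem smooth3_dZ {f : F3} (hf : Smooth3 f) : Smooth3 (dZ f) := by
  have hF := hf.differentiable (by simp)
  have h : (fun q : ℝ × ℝ × ℝ => dZ f q.1 q.2.1 q.2.2)
      = fun q => fderiv ℝ (fun q : ℝ × ℝ × ℝ => f q.1 q.2.1 q.2.2) q (0, 0, 1) := by
    funext q
    have hline : HasDerivAt (fun t : ℝ => ((q.1, q.2.1, t) : ℝ × ℝ × ℝ)) (0, 0, 1) q.2.2 :=
      (hasDerivAt_const _ _).prodMk ((hasDerivAt_const _ _).prodMk (hasDerivAt_id _))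
    exact ((hF q).hasFDerivAt.comp_hasDerivAt q.2.2 hline).deriv
  rw [Smooth3, h]
  exact (hf.fderiv_right (by simp)).clm_apply contDiff_const

theorem dot_advV_mul_self_eq_advS {v bR bP bZ : F3} {R φ Z : ℝ}
    (hv : PartiallyDifferentiableAt v R φ Z) (hR : PartiallyDifferentiableAt bR R φ Z)
    (hP : PartiallyDifferentiableAt bP R φ Z) (hZ : PartiallyDifferentiableAt bZ R φ Z) :
    let xR : F3 := fun r a z => v r a z * bR r a z
    let xP : F3 := fun r a z => v r a z * bP r a z
    let xZ : F3 := fun r a z => v r a z * bZ r a z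
    bR R φ Z * advVR xR xP xZ xR xP xZ R φ Z + bP R φ Z * advVP xR xP xZ xR xP xZ R φ Z
        + bZ R φ Z * advVZ xR xP xZ xR xP xZ R φ Z
      = advS bR bP bZ
          (fun r a z => v r a z ^ 2 * (bR r a z ^ 2 + bP r a z ^ 2 + bZ r a z ^ 2) / 2) R φ Z := by
  obtain ⟨hv₁, hv₂, hv₃⟩ := hv
  obtain ⟨hR₁, hR₂, hR₃⟩ := hR
  obtain ⟨hP₁, hP₂, hP₃⟩ := hP
  obtain ⟨hZ₁, hZ₂, hZ₃⟩ := hZ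
  have e₁ := deriv_sq_mul_sq_add_sq_add_sq_div_two hv₁ hR₁ hP₁ hZ₁
  have e₂ := deriv_sq_mul_sq_add_sq_add_sq_div_two hv₂ hR₂ hP₂ hZ₂
  have e₃ := deriv_sq_mul_sq_add_sq_add_sq_div_two hv₃ hR₃ hP₃ hZ₃
  simp only [advVR, advVP, advVZ, advS, dR, dP, dZ]
  rw [e₁, e₂, e₃]
  ring

theorem partiallyDifferentiableAt_BR {ψ : F3} (hψ : Smooth3 ψ) {R : ℝ} (hR : R ≠ 0) (φ Z : ℝ) :
    PartiallyDifferentiableAt (BR ψ) R φ Z := by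
  obtain ⟨h₁, h₂, h₃⟩ := (smooth3_dZ hψ).partiallyDifferentiableAt R φ Z
  refine ⟨?_, ?_, ?_⟩ <;> unfold BR <;> fun_prop (disch := assumption)

theorem partiallyDifferentiableAt_BZ {ψ : F3} (hψ : Smooth3 ψ) {R : ℝ} (hR : R ≠ 0) (φ Z : ℝ) :
    PartiallyDifferentiableAt (BZ ψ) R φ Z := by
  obtain ⟨h₁, h₂, h₃⟩ := (smooth3_dR hψ).partiallyDifferentiableAt R φ Z
  refine ⟨?_, ?_, ?_⟩ <;> unfold BZ <;> fun_prop (disch := assumption)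

theorem partiallyDifferentiableAt_BP (F0 : ℝ) {R : ℝ} (hR : R ≠ 0) (φ Z : ℝ) :
    PartiallyDifferentiableAt (BP F0) R φ Z := by
  refine ⟨?_, ?_, ?_⟩ <;> unfold BP <;> fun_prop (disch := assumption)

theorem B2_eq_sq_add_sq_add_sq (F0 : ℝ) (ψ : F3) (R φ Z : ℝ) :
    B2 F0 ψ R φ Z = BR ψ R φ Z ^ 2 + BP F0 R φ Z ^ 2 + BZ ψ R φ Z ^ 2 := by
  simp only [B2, BR, BP, BZ]
  ring

theorem advS_BR_BP_BZ_eq (F0 : ℝ) (ψ f : F3) (R φ Z : ℝ) :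
    advS (BR ψ) (BP F0) (BZ ψ) f R φ Z = -(1 / R) * pb ψ f R φ Z + F0 / R ^ 2 * dP f R φ Z := by
  simp only [advS, BR, BP, BZ, pb]
  ring

theorem B_dot_parallel_advection_general (F0 : ℝ) (ψ vpar ρ : F3)
    (hψ : Smooth3 ψ) (hv : Smooth3 vpar) :
    ∀ R φ Z : ℝ, 0 < R →
      BR ψ R φ Z * (ρ R φ Z * advVR (XR ψ vpar) (XP F0 vpar) (XZ ψ vpar)
          (XR ψ vpar) (XP F0 vpar) (XZ ψ vpar) R φ Z)
        + BP F0 R φ Z * (ρ R φ Z * advVP (XR ψ vpar) (XP F0 vpar) (XZ ψ vpar)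
          (XR ψ vpar) (XP F0 vpar) (XZ ψ vpar) R φ Z)
        + BZ ψ R φ Z * (ρ R φ Z * advVZ (XR ψ vpar) (XP F0 vpar) (XZ ψ vpar)
          (XR ψ vpar) (XP F0 vpar) (XZ ψ vpar) R φ Z)
      = -(ρ R φ Z / R) * pb ψ (fun r a z => vpar r a z ^ 2 * B2 F0 ψ r a z / 2) R φ Z
        + ρ R φ Z * (F0 / R ^ 2)
            * dP (fun r a z => vpar r a z ^ 2 * B2 F0 ψ r a z / 2) R φ Z := by
  intro R φ Z hR
  have key := dot_advV_mul_self_eq_advS (hv.partiallyDifferentiableAt R φ Z)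
    (partiallyDifferentiableAt_BR hψ hR.ne' φ Z) (partiallyDifferentiableAt_BP F0 hR.ne' φ Z)
    (partiallyDifferentiableAt_BZ hψ hR.ne' φ Z)
  dsimp only at key
  unfold XR XP XZ
  simp only [B2_eq_sq_add_sq_add_sq]
  linear_combination ρ R φ Z * (key.trans (advS_BR_BP_BZ_eq F0 ψ _ R φ Z))

/-- `B·(ρ (v∥B)·∇(v∥B)) = −(ρ/R)[ψ, v∥²|B|²/2] + ρ(F0/R²)∂_φ(v∥²|B|²/2)`. -/
theorem B_dot_parallel_advection (F0 : ℝ) (ψ vpar ρ : F3)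
    (hψ : Smooth3 ψ) (hv : Smooth3 vpar) (hρ : Smooth3 ρ) :
    ∀ R φ Z : ℝ, 0 < R →
      BR ψ R φ Z * (ρ R φ Z * advVR (XR ψ vpar) (XP F0 vpar) (XZ ψ vpar)
          (XR ψ vpar) (XP F0 vpar) (XZ ψ vpar) R φ Z)
        + BP F0 R φ Z * (ρ R φ Z * advVP (XR ψ vpar) (XP F0 vpar) (XZ ψ vpar)
          (XR ψ vpar) (XP F0 vpar) (XZ ψ vpar) R φ Z)
        + BZ ψ R φ Z * (ρ R φ Z * advVZ (XR ψ vpar) (XP F0 vpar) (XZ ψ vpar)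
          (XR ψ vpar) (XP F0 vpar) (XZ ψ vpar) R φ Z)
      = -(ρ R φ Z / R) * pb ψ (fun r a z => vpar r a z ^ 2 * B2 F0 ψ r a z / 2) R φ Z
        + ρ R φ Z * (F0 / R ^ 2)
            * dP (fun r a z => vpar r a z ^ 2 * B2 F0 ψ r a z / 2) R φ Z :=
  B_dot_parallel_advection_general F0 ψ vpar ρ hψ hv
end
end
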